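/- arXiv:2412.06766 — 2 statements merged into one kernel-verified Lean document; each statement's English description precedes it below -/
import Mathlib

section
/- The kernel R(u,u') = ∏_{k=1}^p min(u_k,u'_k) − ∏_{k=1}^p u_k u'_k − Σ_{l=1}^p (min(u_l,u'_l) − u_l u'_l) ∏_{k≠l} u_k u'_k on [0,1]^p × [0,1]^p is symmetric and positive semidefinite: for any finite collection u^{(1)},...,u^{(m)} ∈ [0,1]^p and real coefficients c₁,...,c_m, we have Σ_{i,j} c_i c_j R(u^{(i)}, u^{(j)}) ≥ 0. -/
/-! Write `K a b = min a b - a * b` and `L a b = a * b`. Expanding `∏ k, min = ∏ k, (K + L)` over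
subsets shows that `Rker` is the sum, over the sets `S` of at least two coordinates, of the kernels
`∏ k ∈ S, K * ∏ k ∉ S, L`. Each of them is positive semidefinite by the Schur product theorem:
`L` has rank one, `min a b` is the Gram kernel `volume ((0, a] ∩ (0, b])` of indicators in `L²`,
and on `[0, 1]` the identity `K a b = min a b * min (1 - a) (1 - b)` makes `K` a product of two
such Gram kernels. -/

open Finset

noncomputable def Rker (p : ℕ) (u u' : Fin p → ℝ) : ℝ :=
  (∏ k, min (u k) (u' k)) - (∏ k, u k * u' k)
    - ∑ l, (min (u l) (u' l) - u l * u' l) * ∏ k ∈ Finset.univ.erase l, u k * u' k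

open Matrix

theorem Finset.prod_add_eq_add_add_sum_two_le_card {ι R : Type*} [DecidableEq ι]
    [CommSemiring R] (s : Finset ι) (f g : ι → R) :
    ∏ i ∈ s, (f i + g i) = ∏ i ∈ s, g i + ∑ l ∈ s, f l * ∏ i ∈ s.erase l, g i
      + ∑ t ∈ s.powerset with 2 ≤ #t, (∏ i ∈ t, f i) * ∏ i ∈ s \ t, g i := by
  have hsmall : {t ∈ s.powerset | ¬ 2 ≤ #t} = insert ∅ (s.image singleton) := by
    ext t
    simp only [mem_filter, mem_powerset, mem_insert, mem_image]
    constructor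
    · rintro ⟨hts, hcard⟩
      obtain h | h : #t = 0 ∨ #t = 1 := by omega
      · exact .inl (card_eq_zero.mp h)
      · obtain ⟨x, rfl⟩ := card_eq_one.mp h
        exact .inr ⟨x, singleton_subset_iff.mp hts, rfl⟩
    · rintro (rfl | ⟨x, hx, rfl⟩)
      · simp
      · simp [hx]
  rw [prod_add, ← sum_filter_not_add_sum_filter _ (fun t => 2 ≤ #t), hsmall,
    sum_insert (by simp), sum_image fun _ _ _ _ => singleton_injective.eq_iff.mp]
  simp [sdiff_singleton_eq_erase]

theorem min_sub_mul_eq_min_mul_min (a b : ℝ) :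
    min a b - a * b = min a b * min (1 - a) (1 - b) := by
  rcases le_total a b with h | h
  · rw [min_eq_left h, min_eq_right (by linarith)]; ring
  · rw [min_eq_right h, min_eq_left (by linarith)]; ring

section PosSemidef

variable {ι : Type*} [Fintype ι]

theorem Matrix.posSemidef_of_mul (a : ι → ℝ) : (of fun i j => a i * a j).PosSemidef := by
  simpa [vecMulVec] using posSemidef_vecMulVec_self_star a

open scoped ComplexOrder in
theorem Matrix.posSemidef_of_prod {𝕜 κ : Type*} [RCLike 𝕜] {M : κ → Matrix ι ι 𝕜}
    (s : Finset κ) (hM : ∀ k ∈ s, (M k).PosSemidef) :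
    (of fun i j => ∏ k ∈ s, M k i j).PosSemidef := by
  classical
  induction s using Finset.induction_on with
  | empty => simpa [vecMulVec] using posSemidef_vecMulVec_self_star (1 : ι → 𝕜)
  | insert k s hk ih =>
    have h := (hM k (mem_insert_self k s)).hadamard (ih fun l hl => hM l (mem_insert_of_mem hl))
    simpa [prod_insert hk, hadamard] using h

theorem Matrix.posSemidef_of_min {a : ι → ℝ} (ha : ∀ i, 0 ≤ a i) :
    (of fun i j => min (a i) (a j)).PosSemidef := by
  convert MeasureTheory.posSemidef_matrix_measure_inter (μ := MeasureTheory.volume)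
    (s := fun i => Set.Ioc 0 (a i)) (fun _ => measurableSet_Ioc) (fun _ => measure_Ioc_lt_top.ne)
    using 2 with i j
  simp [Set.Ioc_inter_Ioc, ha]

theorem Matrix.posSemidef_of_min_sub_mul {a : ι → ℝ} (ha : ∀ i, a i ∈ Set.Icc 0 1) :
    (of fun i j => min (a i) (a j) - a i * a j).PosSemidef := by
  have h := (posSemidef_of_min fun i => (ha i).1).hadamard
    (posSemidef_of_min (a := fun i => 1 - a i) fun i => sub_nonneg.mpr (ha i).2)
  simpa [hadamard, min_sub_mul_eq_min_mul_min] using h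

end PosSemidef

theorem Rker_eq_sum_two_le_card (p : ℕ) (u u' : Fin p → ℝ) :
    Rker p u u' = ∑ S ∈ univ.powerset with 2 ≤ #S,
      (∏ k ∈ S, (min (u k) (u' k) - u k * u' k)) * ∏ k ∈ univ \ S, u k * u' k := by
  have h := prod_add_eq_add_add_sum_two_le_card univ (fun k => min (u k) (u' k) - u k * u' k)
    fun k => u k * u' k
  simp only [sub_add_cancel] at h
  rw [Rker, h]
  ring

theorem posSemidef_of_Rker {p m : ℕ} {u : Fin m → Fin p → ℝ}
    (hu : ∀ i k, u i k ∈ Set.Icc 0 1) : (of fun i j => Rker p (u i) (u j)).PosSemidef := by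
  have hterm (S : Finset (Fin p)) :
      (of fun i j => (∏ k ∈ S, (min (u i k) (u j k) - u i k * u j k))
        * ∏ k ∈ univ \ S, u i k * u j k).PosSemidef :=
    (posSemidef_of_prod S fun k _ => posSemidef_of_min_sub_mul fun i => hu i k).hadamard
      (posSemidef_of_prod (univ \ S) fun k _ => posSemidef_of_mul fun i => u i k)
  convert posSemidef_sum {S ∈ univ.powerset | 2 ≤ #S} fun S _ => hterm S
  ext i j
  simp [Rker_eq_sum_two_le_card, Matrix.sum_apply]

/-- The kernel `R` on `[0,1]^p × [0,1]^p` is symmetric and positive semidefinite. -/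
theorem stmt8 (p : ℕ) :
    (∀ u u' : Fin p → ℝ, Rker p u u' = Rker p u' u) ∧
    (∀ (m : ℕ) (u : Fin m → Fin p → ℝ), (∀ i k, u i k ∈ Set.Icc (0:ℝ) 1) →
      ∀ c : Fin m → ℝ, 0 ≤ ∑ i, ∑ j, c i * c j * Rker p (u i) (u j)) := by
  refine ⟨fun u u' => by simp only [Rker, min_comm, mul_comm], fun m u hu c => ?_⟩
  have h := (posSemidef_of_Rker hu).dotProduct_mulVec_nonneg c
  simpa [dotProduct, mulVec, mul_sum, mul_assoc, mul_comm (Rker _ _ _)] using h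
end

section
/- Let F be a class of indicator functions f_{x,r}(y) = 1{d₁(x₁,y₁) ≤ r₁, ..., d_p(x_p,y_p) ≤ r_p} indexed by x ∈ Ω and r ∈ [0,∞)^p, on a product of metric spaces Ω = ∏ Ω_k with a probability measure μ on Ω. Suppose: (i) for each k, ε log N(ε, Ω_k, d_k) → 0 as ε ↓ 0, and (ii) the joint distance profiles are uniformly Lipschitz: there is L > 0 with |F_x(r) − F_x(r')| ≤ L‖r − r'‖ for all x and r, r', where F_x(r) = μ{y : d_k(x_k,y_k) ≤ r_k ∀k}. Then the bracketing numbers of F in L¹(μ) satisfy ε log N_[](ε, F, L¹(μ)) → 0 as ε ↓ 0. -/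
open MeasureTheory Metric Set
open scoped ENNReal

noncomputable def coveringNumber {M : Type*} [PseudoMetricSpace M] (ε : ℝ) (s : Set M) : ℕ∞ :=
  ⨅ (t : Finset M) (_ : s ⊆ ⋃ x ∈ t, Metric.closedBall x ε), (t.card : ℕ∞)

/-- The `L¹(μ)` bracketing number of a class of functions `F`: the minimal number of
`ε`-brackets `[l, u]` (pairs `l ≤ u` with `∫ (u - l) dμ < ε`) needed to cover `F`. -/
noncomputable def bracketingNumber {Ω : Type*} [MeasurableSpace Ω] (μ : Measure Ω)
    (F : Set (Ω → ℝ)) (ε : ℝ) : ℕ∞ :=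
  ⨅ (B : Finset ((Ω → ℝ) × (Ω → ℝ)))
    (_ : ∀ f ∈ F, ∃ b ∈ B, (∀ y, b.1 y ≤ f y) ∧ (∀ y, f y ≤ b.2 y) ∧
      ∫ y, (b.2 y - b.1 y) ∂μ < ε), (B.card : ℕ∞)

open Classical in
/-- The class of indicator functions of products of closed balls, which determines the
joint distance profiles. -/
noncomputable def profileClass {p : ℕ} (Ω : Fin p → Type*) [∀ k, MetricSpace (Ω k)] :
    Set ((∀ k, Ω k) → ℝ) :=
  {f | ∃ (x : ∀ k, Ω k) (r : Fin p → ℝ), (∀ k, 0 ≤ r k) ∧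
    f = fun y => if ∀ k, dist (x k) (y k) ≤ r k then (1:ℝ) else 0}

/-
Cover each factor `Ω k` by an `η`-net `t_k`; a finite net also bounds `diam Ω k`. A ball
`B(x_k, r_k)` is sandwiched between two concentric balls around a net point `z_k` near `x_k`
whose radii lie on the grid `η ℤ` and differ by `3η`, and after clamping `r_k` at `diam Ω k`
only `⌊diam Ω k / η⌋ + 1` grid radii are needed. The products of these balls give brackets for
the whole class; by the Lipschitz bound on the profiles their `L¹(μ)` width is
`≤ 3 L √p η < ε` for `η = ε / (3 L √p + 1)`. Their number is
`∏ₖ N(η, Ω k) (⌊diam Ω k / η⌋ + 1)`, and `η log (⌊D / η⌋ + 1) ≤ η log (D + 1) - η log η → 0`,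
so `ε log N_[](ε) → 0` follows from the hypothesis on the covering numbers.
-/

open Filter Topology

lemma Real.log_natCast_le_log_natCast {a b : ℕ} (h : a ≤ b) : Real.log a ≤ Real.log b := by
  rcases Nat.eq_zero_or_pos a with rfl | ha
  · simpa using Real.log_natCast_nonneg b
  · exact Real.log_le_log (by exact_mod_cast ha) (by exact_mod_cast h)

lemma Real.log_natCast_mul_le (a b : ℕ) :
    Real.log ((a * b : ℕ) : ℝ) ≤ Real.log a + Real.log b := by
  rcases eq_or_ne a 0 with rfl | ha
  · simpa using Real.log_natCast_nonneg b
  rcases eq_or_ne b 0 with rfl | hb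
  · simpa using Real.log_natCast_nonneg a
  rw [Nat.cast_mul, Real.log_mul (by exact_mod_cast ha) (by exact_mod_cast hb)]

lemma mul_log_natCast_nonneg {ε : ℝ} (hε : 0 ≤ ε) (n : ℕ) : 0 ≤ ε * Real.log n :=
  mul_nonneg hε (Real.log_natCast_nonneg n)

def HasVanishingEntropy (N : ℝ → ℕ∞) : Prop :=
  (∀ᶠ ε in 𝓝[>] 0, N ε ≠ ⊤) ∧
    Tendsto (fun ε => ε * Real.log ((N ε).toNat : ℝ)) (𝓝[>] 0) (𝓝 0)

namespace HasVanishingEntropy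

theorem iff_forall_exists {N : ℝ → ℕ∞} :
    HasVanishingEntropy N ↔ ∀ δ : ℝ, 0 < δ → ∃ ε₀ : ℝ, 0 < ε₀ ∧ ∀ ε ∈ Ioc (0:ℝ) ε₀,
      N ε ≠ ⊤ ∧ ε * Real.log ((N ε).toNat : ℝ) < δ := by
  constructor
  · intro h δ hδ
    obtain ⟨ε₀, hε₀, hsub⟩ :=
      mem_nhdsGT_iff_exists_Ioc_subset.1 (h.1.and (h.2.eventually_lt_const hδ))
    exact ⟨ε₀, hε₀, hsub⟩
  · intro h
    obtain ⟨ε₀, hε₀, hfin⟩ := h 1 one_pos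
    refine ⟨mem_of_superset (Ioc_mem_nhdsGT hε₀) fun ε hε => (hfin ε hε).1,
      tendsto_order.2 ⟨fun a ha => ?_, fun δ hδ => ?_⟩⟩
    · filter_upwards [self_mem_nhdsWithin] with ε hε
      exact ha.trans_le (mul_log_natCast_nonneg (le_of_lt hε) _)
    · obtain ⟨ε₁, hε₁, hlt⟩ := h δ hδ
      exact mem_of_superset (Ioc_mem_nhdsGT hε₁) fun ε hε => (hlt ε hε).2

lemma of_eventually_le {N M : ℝ → ℕ∞} (hM : HasVanishingEntropy M)
    (hle : ∀ᶠ ε in 𝓝[>] 0, N ε ≤ M ε) : HasVanishingEntropy N := by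
  refine ⟨(hM.1.and hle).mono fun ε h => ne_top_of_le_ne_top h.1 h.2, ?_⟩
  refine tendsto_of_tendsto_of_tendsto_of_le_of_le' tendsto_const_nhds hM.2 ?_ ?_
  · filter_upwards [self_mem_nhdsWithin] with ε hε
    exact mul_log_natCast_nonneg (le_of_lt hε) _
  · filter_upwards [self_mem_nhdsWithin, hM.1, hle] with ε hε hfin h
    exact mul_le_mul_of_nonneg_left
      (Real.log_natCast_le_log_natCast (ENat.toNat_le_toNat h hfin)) (le_of_lt hε)

lemma comp_div_const {N : ℝ → ℕ∞} (hN : HasVanishingEntropy N) {c : ℝ} (hc : 0 < c) :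
    HasVanishingEntropy fun ε => N (ε / c) := by
  have hdiv : Tendsto (fun ε : ℝ => ε / c) (𝓝[>] 0) (𝓝[>] 0) :=
    tendsto_nhdsWithin_iff.2 ⟨(zero_div c ▸ (continuous_id.div_const c).tendsto 0).mono_left
      nhdsWithin_le_nhds, eventually_nhdsWithin_of_forall fun ε hε => div_pos hε hc⟩
  refine ⟨hdiv.eventually hN.1, ?_⟩
  have := (hN.2.comp hdiv).const_mul c
  rw [mul_zero] at this
  refine this.congr fun ε => ?_
  simp only [Function.comp_apply]
  field_simp

lemma mul {N M : ℝ → ℕ∞} (hN : HasVanishingEntropy N) (hM : HasVanishingEntropy M) :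
    HasVanishingEntropy fun ε => N ε * M ε := by
  refine ⟨(hN.1.and hM.1).mono fun ε h => WithTop.mul_ne_top h.1 h.2, ?_⟩
  refine tendsto_of_tendsto_of_tendsto_of_le_of_le' tendsto_const_nhds
    (by simpa using hN.2.add hM.2) ?_ ?_
  · filter_upwards [self_mem_nhdsWithin] with ε hε
    exact mul_log_natCast_nonneg (le_of_lt hε) _
  · filter_upwards [self_mem_nhdsWithin] with ε hε
    rw [ENat.toNat_mul, ← mul_add]
    exact mul_le_mul_of_nonneg_left (Real.log_natCast_mul_le _ _) (le_of_lt hε)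

lemma one : HasVanishingEntropy fun _ => 1 :=
  ⟨Eventually.of_forall fun _ => ENat.one_ne_top, by simp⟩

lemma finset_prod {ι : Type*} (s : Finset ι) {N : ι → ℝ → ℕ∞}
    (hN : ∀ k ∈ s, HasVanishingEntropy (N k)) : HasVanishingEntropy fun ε => ∏ k ∈ s, N k ε := by
  classical
  induction s using Finset.induction_on with
  | empty => simpa using one
  | insert a s ha ih =>
    simp only [Finset.prod_insert ha]
    exact (hN a (Finset.mem_insert_self a s)).mul
      (ih fun k hk => hN k (Finset.mem_insert_of_mem hk))

lemma natCast_floor_div_add_one {C : ℝ} (hC : 0 ≤ C) :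
    HasVanishingEntropy fun η => ((⌊C / η⌋₊ + 1 : ℕ) : ℕ∞) := by
  refine ⟨Eventually.of_forall fun _ => ENat.natCast_ne_top _, ?_⟩
  have hlim : Tendsto (fun η => η * Real.log (C + 1) - η * Real.log η) (𝓝[>] 0) (𝓝 0) := by
    have hcont : Continuous fun η : ℝ => η * Real.log (C + 1) - η * Real.log η :=
      (continuous_id.mul continuous_const).sub Real.continuous_mul_log
    simpa using (hcont.tendsto 0).mono_left nhdsWithin_le_nhds
  refine tendsto_of_tendsto_of_tendsto_of_le_of_le' tendsto_const_nhds hlim ?_ ?_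
  · filter_upwards [self_mem_nhdsWithin] with η hη
    exact mul_log_natCast_nonneg (le_of_lt hη) _
  · filter_upwards [self_mem_nhdsWithin, Ioc_mem_nhdsGT one_pos] with η hη hη1
    have hη : 0 < η := hη
    have hfloor : ((⌊C / η⌋₊ + 1 : ℕ) : ℝ) ≤ (C + 1) / η := by
      rw [Nat.cast_add_one, add_div]
      gcongr
      · exact Nat.floor_le (div_nonneg hC hη.le)
      · rw [le_div_iff₀ hη]; linarith [hη1.2]
    calc η * Real.log (((⌊C / η⌋₊ + 1 : ℕ) : ℕ∞).toNat : ℝ)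
        ≤ η * Real.log ((C + 1) / η) := by
          rw [ENat.toNat_natCast]
          exact mul_le_mul_of_nonneg_left (Real.log_le_log (by positivity) hfloor) hη.le
      _ = η * Real.log (C + 1) - η * Real.log η := by
          rw [Real.log_div (by positivity) hη.ne', mul_sub]

end HasVanishingEntropy

section CoveringNumber

variable {M : Type*} [PseudoMetricSpace M] {η : ℝ}

lemma exists_finset_card_le_coveringNumber {s : Set M} (h : coveringNumber η s ≠ ⊤) :
    ∃ t : Finset M, s ⊆ ⋃ x ∈ t, closedBall x η ∧ t.card ≤ (coveringNumber η s).toNat := by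
  have hlt : coveringNumber η s < coveringNumber η s + 1 := by rw [ENat.lt_add_one_iff h]
  obtain ⟨t, ht⟩ := iInf_lt_iff.1 hlt
  obtain ⟨hcov, hcard⟩ := iInf_lt_iff.1 ht
  rw [ENat.lt_add_one_iff h] at hcard
  exact ⟨t, hcov, by simpa using ENat.toNat_le_toNat hcard h⟩

lemma isBounded_univ_of_coveringNumber_ne_top (h : coveringNumber η (univ : Set M) ≠ ⊤) :
    Bornology.IsBounded (univ : Set M) := by
  obtain ⟨t, hcov, -⟩ := exists_finset_card_le_coveringNumber h
  exact ((Bornology.isBounded_biUnion_finset t).2 fun _ _ => isBounded_closedBall).subset hcov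

lemma closedBall_floor_mul_sub_subset {a z : M} {r : ℝ} (hη : 0 < η) (hr : 0 ≤ r)
    (hz : dist z a ≤ η) :
    closedBall z (⌊r / η⌋₊ * η - η) ⊆ closedBall a r ∧
      closedBall a r ⊆ closedBall z (⌊r / η⌋₊ * η - η + 3 * η) := by
  have hle : ⌊r / η⌋₊ * η ≤ r := (le_div_iff₀ hη).1 (Nat.floor_le (div_nonneg hr hη.le))
  have hlt : r < (⌊r / η⌋₊ + 1) * η := (div_lt_iff₀ hη).1 (Nat.lt_floor_add_one _)
  refine ⟨closedBall_subset_closedBall' ?_, closedBall_subset_closedBall' ?_⟩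
  · linarith
  · rw [dist_comm]; linarith

lemma closedBall_min_eq {C : ℝ} (hC : ∀ a b : M, dist a b ≤ C) (a : M) (r : ℝ) :
    closedBall a (min r C) = closedBall a r := by
  ext y
  simp [hC]

lemma exists_finset_ballBrackets (hη : 0 < η) (hfin : coveringNumber η (univ : Set M) ≠ ⊤) :
    ∃ G : Finset (M × ℝ),
      G.card ≤ (coveringNumber η (univ : Set M)).toNat * (⌊diam (univ : Set M) / η⌋₊ + 1) ∧
      ∀ (a : M) (r : ℝ), 0 ≤ r → ∃ g ∈ G,
        closedBall g.1 g.2 ⊆ closedBall a r ∧ closedBall a r ⊆ closedBall g.1 (g.2 + 3 * η) := by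
  classical
  set C := diam (univ : Set M)
  have hC : ∀ a b : M, dist a b ≤ C := fun a b =>
    dist_le_diam_of_mem (isBounded_univ_of_coveringNumber_ne_top hfin) (mem_univ a) (mem_univ b)
  obtain ⟨t, hcov, hcard⟩ := exists_finset_card_le_coveringNumber hfin
  refine ⟨(t ×ˢ Finset.range (⌊C / η⌋₊ + 1)).image fun zi => (zi.1, zi.2 * η - η), ?_, ?_⟩
  · calc _ ≤ (t ×ˢ Finset.range (⌊C / η⌋₊ + 1)).card := Finset.card_image_le
      _ ≤ _ := by rw [Finset.card_product, Finset.card_range]; gcongr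
  intro a r hr
  obtain ⟨z, hz, hza⟩ : ∃ z ∈ t, dist z a ≤ η := by
    simpa [dist_comm] using hcov (mem_univ a)
  refine ⟨(z, ⌊min r C / η⌋₊ * η - η), Finset.mem_image.2 ⟨(z, ⌊min r C / η⌋₊), ?_, rfl⟩, ?_⟩
  · refine Finset.mem_product.2 ⟨hz, Finset.mem_range.2 (Nat.lt_succ_of_le ?_)⟩
    exact Nat.floor_le_floor (div_le_div_of_nonneg_right (min_le_right r C) hη.le)
  · rw [← closedBall_min_eq hC a r]
    exact closedBall_floor_mul_sub_subset hη (le_min hr diam_nonneg) hza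

end CoveringNumber

section Bracketing

variable {X : Type*} [MeasurableSpace X] (μ : Measure X)

lemma bracketingNumber_mono {F G : Set (X → ℝ)} (h : F ⊆ G) (ε : ℝ) :
    bracketingNumber μ F ε ≤ bracketingNumber μ G ε :=
  iInf_mono fun _ => iInf_mono' fun hB => ⟨fun f hf => hB f (h hf), le_rfl⟩

lemma bracketingNumber_le_card {F : Set (X → ℝ)} {ε : ℝ} (B : Finset ((X → ℝ) × (X → ℝ)))
    (hB : ∀ f ∈ F, ∃ b ∈ B, (∀ y, b.1 y ≤ f y) ∧ (∀ y, f y ≤ b.2 y) ∧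
      ∫ y, (b.2 y - b.1 y) ∂μ < ε) :
    bracketingNumber μ F ε ≤ B.card :=
  (iInf_le _ B).trans (iInf_le _ hB)

lemma integral_indicator_one_sub [IsFiniteMeasure μ] {s t : Set X} (hs : MeasurableSet s)
    (ht : MeasurableSet t) :
    ∫ y, (t.indicator 1 y - s.indicator 1 y) ∂μ = μ.real t - μ.real s := by
  rw [integral_sub (f := t.indicator 1) (g := s.indicator 1)
    ((integrable_const (1 : ℝ)).indicator ht)
    ((integrable_const (1 : ℝ)).indicator hs), integral_indicator_one ht, integral_indicator_one hs]

end Bracketing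

section PiClosedBall

variable {ι : Type*} {Ω : ι → Type*} [∀ k, PseudoMetricSpace (Ω k)]

def piClosedBall (x : ∀ k, Ω k) (r : ι → ℝ) : Set (∀ k, Ω k) :=
  univ.pi fun k => closedBall (x k) (r k)

lemma setOf_forall_dist_le_eq_piClosedBall (x : ∀ k, Ω k) (r : ι → ℝ) :
    {y | ∀ k, dist (x k) (y k) ≤ r k} = piClosedBall x r := by
  ext y
  simp [piClosedBall, dist_comm]

lemma measurableSet_piClosedBall [Countable ι] [∀ k, MeasurableSpace (Ω k)]
    [∀ k, OpensMeasurableSpace (Ω k)] (x : ∀ k, Ω k) (r : ι → ℝ) :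
    MeasurableSet (piClosedBall x r) :=
  MeasurableSet.univ_pi fun _ => measurableSet_closedBall

variable (Ω) in
def piBallIndicators : Set ((∀ k, Ω k) → ℝ) :=
  {f | ∃ x r, (∀ k, 0 ≤ r k) ∧ f = (piClosedBall x r).indicator 1}

lemma profileClass_subset_piBallIndicators {p : ℕ} (Ω : Fin p → Type*)
    [∀ k, MetricSpace (Ω k)] : profileClass Ω ⊆ piBallIndicators Ω := by
  classical
  rintro f ⟨x, r, hr, rfl⟩
  refine ⟨x, r, hr, funext fun y => ?_⟩
  rw [← setOf_forall_dist_le_eq_piClosedBall]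
  simp [Set.indicator]

theorem bracketingNumber_piBallIndicators_le [Fintype ι] [∀ k, MeasurableSpace (Ω k)]
    [∀ k, OpensMeasurableSpace (Ω k)] (μ : Measure (∀ k, Ω k)) [IsFiniteMeasure μ] {w ε : ℝ}
    (G : ∀ k, Finset (Ω k × ℝ))
    (hG : ∀ k (a : Ω k) (r : ℝ), 0 ≤ r → ∃ g ∈ G k,
      closedBall g.1 g.2 ⊆ closedBall a r ∧ closedBall a r ⊆ closedBall g.1 (g.2 + w))
    (hwidth : ∀ x r, μ.real (piClosedBall x fun k => r k + w) - μ.real (piClosedBall x r) < ε) :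
    bracketingNumber μ (piBallIndicators Ω) ε ≤ ((∏ k, (G k).card : ℕ) : ℕ∞) := by
  classical
  let bracket (g : ∀ k, Ω k × ℝ) : ((∀ k, Ω k) → ℝ) × ((∀ k, Ω k) → ℝ) :=
    ((piClosedBall (fun k => (g k).1) fun k => (g k).2).indicator 1,
      (piClosedBall (fun k => (g k).1) fun k => (g k).2 + w).indicator 1)
  refine (bracketingNumber_le_card μ ((Fintype.piFinset G).image bracket) ?_).trans ?_
  · rintro f ⟨x, r, hr, rfl⟩
    choose g hgG hg using fun k => hG k (x k) (r k) (hr k)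
    refine ⟨bracket g, Finset.mem_image_of_mem _ (Fintype.mem_piFinset.2 hgG), fun y => ?_,
      fun y => ?_, ?_⟩
    · exact indicator_le_indicator_of_subset (pi_mono fun k _ => (hg k).1)
        (fun _ => zero_le_one) y
    · exact indicator_le_indicator_of_subset (pi_mono fun k _ => (hg k).2)
        (fun _ => zero_le_one) y
    · rw [integral_indicator_one_sub μ (measurableSet_piClosedBall _ _)
        (measurableSet_piClosedBall _ _)]
      exact hwidth _ _
  · rw [← Fintype.card_piFinset]
    exact_mod_cast Finset.card_image_le

lemma measureReal_piClosedBall_add_sub_le [Fintype ι] [∀ k, MeasurableSpace (Ω k)]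
    (μ : Measure (∀ k, Ω k)) {L : ℝ}
    (hlip : ∀ (x : ∀ k, Ω k) (r r' : ι → ℝ),
      |(μ {y | ∀ k, dist (x k) (y k) ≤ r k}).toReal
          - (μ {y | ∀ k, dist (x k) (y k) ≤ r' k}).toReal|
        ≤ L * Real.sqrt (∑ k, (r k - r' k) ^ 2))
    (x : ∀ k, Ω k) (r : ι → ℝ) {w : ℝ} (hw : 0 ≤ w) :
    μ.real (piClosedBall x fun k => r k + w) - μ.real (piClosedBall x r)
      ≤ L * Real.sqrt (Fintype.card ι) * w := by
  have h := hlip x (fun k => r k + w) r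
  rw [setOf_forall_dist_le_eq_piClosedBall, setOf_forall_dist_le_eq_piClosedBall] at h
  simp only [add_sub_cancel_left, Finset.sum_const, Finset.card_univ, nsmul_eq_mul] at h
  rw [Real.sqrt_mul (Nat.cast_nonneg _), Real.sqrt_sq hw, ← mul_assoc] at h
  exact (le_abs_self _).trans h

end PiClosedBall

theorem bracketingNumber_profileClass_le {p : ℕ} {Ω : Fin p → Type*} [∀ k, MetricSpace (Ω k)]
    [∀ k, MeasurableSpace (Ω k)] [∀ k, OpensMeasurableSpace (Ω k)]
    (μ : Measure (∀ k, Ω k)) [IsFiniteMeasure μ] {L η ε : ℝ}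
    (hlip : ∀ (x : ∀ k, Ω k) (r r' : Fin p → ℝ),
      |(μ {y | ∀ k, dist (x k) (y k) ≤ r k}).toReal
          - (μ {y | ∀ k, dist (x k) (y k) ≤ r' k}).toReal|
        ≤ L * Real.sqrt (∑ k, (r k - r' k) ^ 2))
    (hη : 0 < η) (hfin : ∀ k, coveringNumber η (univ : Set (Ω k)) ≠ ⊤)
    (hε : 3 * L * Real.sqrt p * η < ε) :
    bracketingNumber μ (profileClass Ω) ε ≤ ∏ k, coveringNumber η (univ : Set (Ω k)) *
      ((⌊diam (univ : Set (Ω k)) / η⌋₊ + 1 : ℕ) : ℕ∞) := by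
  choose G hGcard hG using fun k => exists_finset_ballBrackets hη (hfin k)
  have hwidth (x : ∀ k, Ω k) (r : Fin p → ℝ) :
      μ.real (piClosedBall x fun k => r k + 3 * η) - μ.real (piClosedBall x r) < ε := by
    refine (measureReal_piClosedBall_add_sub_le μ hlip x r (by positivity)).trans_lt ?_
    rw [Fintype.card_fin]
    linarith
  calc bracketingNumber μ (profileClass Ω) ε
      ≤ bracketingNumber μ (piBallIndicators Ω) ε :=
        bracketingNumber_mono μ (profileClass_subset_piBallIndicators Ω) ε
    _ ≤ ((∏ k, (G k).card : ℕ) : ℕ∞) := bracketingNumber_piBallIndicators_le μ G hG hwidth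
    _ ≤ _ := by
        rw [Nat.cast_prod]
        refine Finset.prod_le_prod' fun k _ => (Nat.cast_le.2 (hGcard k)).trans ?_
        rw [Nat.cast_mul]
        gcongr
        exact ENat.natCast_toNat_le_self _

theorem stmt10 {p : ℕ} {Ω : Fin p → Type*} [∀ k, MetricSpace (Ω k)]
    [∀ k, MeasurableSpace (Ω k)] [∀ k, BorelSpace (Ω k)]
    (μ : Measure (∀ k, Ω k)) [IsProbabilityMeasure μ]
    (hcov : ∀ k, ∀ δ : ℝ, 0 < δ → ∃ ε₀ : ℝ, 0 < ε₀ ∧ ∀ ε ∈ Set.Ioc (0:ℝ) ε₀,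
      coveringNumber ε (Set.univ : Set (Ω k)) ≠ ⊤ ∧
        ε * Real.log ((coveringNumber ε (Set.univ : Set (Ω k))).toNat : ℝ) < δ)
    (L : ℝ) (hL : 0 < L)
    (hlip : ∀ (x : ∀ k, Ω k) (r r' : Fin p → ℝ),
      |(μ {y | ∀ k, dist (x k) (y k) ≤ r k}).toReal
          - (μ {y | ∀ k, dist (x k) (y k) ≤ r' k}).toReal|
        ≤ L * Real.sqrt (∑ k, (r k - r' k) ^ 2)) :
    ∀ δ : ℝ, 0 < δ → ∃ ε₀ : ℝ, 0 < ε₀ ∧ ∀ ε ∈ Set.Ioc (0:ℝ) ε₀,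
      bracketingNumber μ (profileClass Ω) ε ≠ ⊤ ∧
        ε * Real.log ((bracketingNumber μ (profileClass Ω) ε).toNat : ℝ) < δ := by
  refine HasVanishingEntropy.iff_forall_exists.1 ?_
  have hcov' (k : Fin p) : HasVanishingEntropy fun η : ℝ => coveringNumber η (univ : Set (Ω k)) :=
    HasVanishingEntropy.iff_forall_exists.2 (hcov k)
  set c := 3 * L * Real.sqrt p + 1
  have hc : 0 < c := by positivity
  have hM : HasVanishingEntropy fun ε => ∏ k, coveringNumber (ε / c) (univ : Set (Ω k)) *
      ((⌊diam (univ : Set (Ω k)) / (ε / c)⌋₊ + 1 : ℕ) : ℕ∞) :=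
    (HasVanishingEntropy.finset_prod _ fun k _ =>
      (hcov' k).mul (HasVanishingEntropy.natCast_floor_div_add_one diam_nonneg)).comp_div_const hc
  refine hM.of_eventually_le ?_
  filter_upwards [self_mem_nhdsWithin,
    eventually_all.2 fun k => ((hcov' k).comp_div_const hc).1] with ε (hε : 0 < ε) hfin
  refine bracketingNumber_profileClass_le μ hlip (div_pos hε hc) hfin ?_
  calc 3 * L * Real.sqrt p * (ε / c) < c * (ε / c) := by gcongr; linarith
    _ = ε := mul_div_cancel₀ ε hc.ne'
end
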